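/- Let N ≥ 2 and let D ∈ ℝ^{N×m} be a matrix each of whose columns sums to zero (𝟏ᵀD = 0), and let λ > 0 satisfy eᵀ(D Dᵀ)e ≥ λ·‖e‖₂² for every e ∈ ℝ^N with Σᵢ eᵢ = 0. Then for all β₁, β₂ > 0, all ω₀ ≥ 0, every e ∈ ℝ^N with Σᵢ eᵢ = 0, and every w ∈ ℝ^N with ‖w‖₂ ≤ ω₀: eᵀ(−β₁·D·tanh(β₂·Dᵀe) + w) ≤ −(β₁·√λ − ω₀)·‖e‖₂ + 0.2785·β₁·m/β₂, where tanh acts componentwise. -/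

import Mathlib

/-!
Write `y = Dᵀe`. The drift-free part of `eᵀ(−β₁ D tanh(β₂ Dᵀe) + w)` is `−β₁ yᵀ tanh(β₂ y)`, and
`|s| − s tanh s ≤ 0.2785` for every real `s` turns `yᵀ tanh(β₂ y)` into `‖y‖₁` up to `0.2785 m / β₂`.
Then `‖y‖₁ ≥ ‖y‖₂ = √(eᵀ D Dᵀ e) ≥ √λ ‖e‖₂` by the spectral bound, and Cauchy–Schwarz gives
`eᵀw ≤ ω₀ ‖e‖₂`.
-/

open Real Matrix

namespace Real

/-- `0.2785` is slightly above `max_{t} t / (exp t + 1) ≈ 0.27846`, attained near `t ≈ 1.2785`;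
the bound for large `t` is the tangent line of `exp` at `1.2785`. -/
lemma le_mul_exp_add_one (t : ℝ) : t ≤ 0.2785 * (exp t + 1) := by
  have exp_lower : (1.3211319 : ℝ) ≤ exp 0.2785 := by
    have h := sum_le_exp_of_nonneg (x := 0.2785) (by norm_num) 5
    simp only [Finset.sum_range_succ, Finset.sum_range_zero, Nat.factorial] at h
    norm_num at h ⊢
    linarith
  have tangent_point : (1 : ℝ) ≤ 0.2785 * exp 1.2785 := by
    have hsplit : exp (1.2785 : ℝ) = exp 1 * exp 0.2785 := by rw [← exp_add]; norm_num
    nlinarith [exp_one_gt_d9]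
  rcases le_or_gt t 0.2785 with ht | ht
  · nlinarith [exp_pos t]
  · have hexp : exp t = exp 1.2785 * exp (t - 1.2785) := by rw [← exp_add]; ring_nf
    have htangent : t - 0.2785 ≤ exp (t - 1.2785) := by linarith [add_one_le_exp (t - 1.2785)]
    nlinarith [mul_le_mul_of_nonneg_left htangent (exp_pos 1.2785).le]

lemma one_sub_tanh (x : ℝ) : 1 - tanh x = 2 / (exp (2 * x) + 1) := by
  have hsq : exp (2 * x) = exp x * exp x := by rw [← exp_add]; ring_nf
  rw [tanh_eq, hsq, exp_neg]
  have := exp_pos x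
  field_simp
  ring

lemma mul_one_sub_tanh_le (x : ℝ) : x * (1 - tanh x) ≤ 0.2785 := by
  have hpos : 0 < exp (2 * x) + 1 := by positivity
  rw [one_sub_tanh, mul_div_assoc', div_le_iff₀ hpos]
  linarith [le_mul_exp_add_one (2 * x)]

lemma abs_sub_mul_tanh_le (x : ℝ) : |x| - x * tanh x ≤ 0.2785 := by
  rcases le_total 0 x with hx | hx
  · rw [abs_of_nonneg hx]
    linarith [mul_one_sub_tanh_le x]
  · have h := mul_one_sub_tanh_le (-x)
    rw [tanh_neg] at h
    rw [abs_of_nonpos hx]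
    linarith

lemma sqrt_sum_sq_le_sum_abs {ι : Type*} (s : Finset ι) (f : ι → ℝ) :
    √(∑ i ∈ s, f i ^ 2) ≤ ∑ i ∈ s, |f i| := by
  rw [sqrt_le_iff]
  refine ⟨Finset.sum_nonneg fun i _ => abs_nonneg _, ?_⟩
  simpa only [sq_abs] using
    Finset.sum_sq_le_sq_sum_of_nonneg (s := s) (f := fun i => |f i|) fun i _ => abs_nonneg _

end Real

lemma sum_abs_le_dotProduct_tanh {ι : Type*} [Fintype ι] {β : ℝ} (hβ : 0 < β) (y : ι → ℝ) :
    ∑ k, |y k| ≤ y ⬝ᵥ (fun k => tanh (β * y k)) + 0.2785 * Fintype.card ι / β := by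
  have hpointwise (k : ι) : |y k| ≤ y k * tanh (β * y k) + 0.2785 / β := by
    have h := abs_sub_mul_tanh_le (β * y k)
    rw [abs_mul, abs_of_pos hβ] at h
    rw [← sub_le_iff_le_add', le_div_iff₀ hβ]
    linarith [show (|y k| - y k * tanh (β * y k)) * β = β * |y k| - β * y k * tanh (β * y k) by ring]
  calc ∑ k, |y k| ≤ ∑ k, (y k * tanh (β * y k) + 0.2785 / β) :=
        Finset.sum_le_sum fun k _ => hpointwise k
    _ = _ := by
        rw [Finset.sum_add_distrib, Finset.sum_const, Finset.card_univ, nsmul_eq_mul]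
        simp only [dotProduct]
        ring

lemma dotProduct_mul_transpose_mulVec {m n R : Type*} [Fintype m] [Fintype n] [CommSemiring R]
    (D : Matrix m n R) (e : m → R) :
    e ⬝ᵥ (D * Dᵀ) *ᵥ e = (Dᵀ *ᵥ e) ⬝ᵥ (Dᵀ *ᵥ e) := by
  rw [← mulVec_mulVec, dotProduct_mulVec, ← mulVec_transpose]

theorem lyapunov_derivative_inequality_general
    (N m : ℕ)
    (D : Matrix (Fin N) (Fin m) ℝ)
    (lam : ℝ)
    (hspec : ∀ e : Fin N → ℝ, (∑ i, e i) = 0 →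
      lam * ∑ i, (e i) ^ 2 ≤ dotProduct e ((D * D.transpose).mulVec e))
    (β₁ β₂ ω₀ : ℝ) (hβ₁ : 0 < β₁) (hβ₂ : 0 < β₂)
    (e : Fin N → ℝ) (he : (∑ i, e i) = 0)
    (w : Fin N → ℝ) (hw : Real.sqrt (∑ i, (w i) ^ 2) ≤ ω₀) :
    (∑ i, e i * (-β₁ * (∑ k, D i k * Real.tanh (β₂ * ∑ j, D j k * e j)) + w i)) ≤
      -(β₁ * Real.sqrt lam - ω₀) * Real.sqrt (∑ i, (e i) ^ 2) +
        0.2785 * β₁ * m / β₂ := by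
  set y := Dᵀ *ᵥ e with hy
  change e ⬝ᵥ (-β₁ • D *ᵥ (fun k => tanh (β₂ * y k)) + w) ≤ _
  rw [dotProduct_add, dotProduct_smul, dotProduct_mulVec, ← mulVec_transpose, ← hy, smul_eq_mul]
  have hspec_y : lam * ∑ i, e i ^ 2 ≤ ∑ k, y k ^ 2 := by
    have h := hspec e he
    rw [dotProduct_mul_transpose_mulVec] at h
    simpa only [dotProduct, ← sq] using h
  have hy_norm : √lam * √(∑ i, e i ^ 2) ≤ ∑ k, |y k| :=
    calc √lam * √(∑ i, e i ^ 2) = √(lam * ∑ i, e i ^ 2) :=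
          (sqrt_mul' _ (Finset.sum_nonneg fun i _ => sq_nonneg _)).symm
      _ ≤ √(∑ k, y k ^ 2) := sqrt_le_sqrt hspec_y
      _ ≤ ∑ k, |y k| := sqrt_sum_sq_le_sum_abs _ _
  have htanh := sum_abs_le_dotProduct_tanh hβ₂ y
  rw [Fintype.card_fin] at htanh
  have hdrift : e ⬝ᵥ w ≤ √(∑ i, e i ^ 2) * ω₀ :=
    (sum_mul_le_sqrt_mul_sqrt _ e w).trans (mul_le_mul_of_nonneg_left hw (sqrt_nonneg _))
  linear_combination β₁ * (hy_norm.trans htanh) + hdrift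

/-- Key Lyapunov-derivative inequality in the proof of the practical-consensus
lemma: for a mean-zero error vector e and a drift w of norm at most ω₀,
eᵀ(−β₁ D tanh(β₂ Dᵀe) + w) ≤ −(β₁√λ − ω₀)‖e‖₂ + 0.2785 β₁ m / β₂. -/
theorem lyapunov_derivative_inequality
    (N m : ℕ) (hN : 2 ≤ N)
    (D : Matrix (Fin N) (Fin m) ℝ)
    (hDcol : ∀ k : Fin m, ∑ i, D i k = 0)
    (lam : ℝ) (hlam : 0 < lam)
    (hspec : ∀ e : Fin N → ℝ, (∑ i, e i) = 0 →
      lam * ∑ i, (e i) ^ 2 ≤ dotProduct e ((D * D.transpose).mulVec e))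
    (β₁ β₂ ω₀ : ℝ) (hβ₁ : 0 < β₁) (hβ₂ : 0 < β₂) (hω₀ : 0 ≤ ω₀)
    (e : Fin N → ℝ) (he : (∑ i, e i) = 0)
    (w : Fin N → ℝ) (hw : Real.sqrt (∑ i, (w i) ^ 2) ≤ ω₀) :
    (∑ i, e i * (-β₁ * (∑ k, D i k * Real.tanh (β₂ * ∑ j, D j k * e j)) + w i)) ≤
      -(β₁ * Real.sqrt lam - ω₀) * Real.sqrt (∑ i, (e i) ^ 2) +
        0.2785 * β₁ * m / β₂ :=
  lyapunov_derivative_inequality_general N m D lam hspec β₁ β₂ ω₀ hβ₁ hβ₂ e he w hw
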